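/- Fix L > 0, nonzero integers N and M, a positive integer k, and set n = k·sign(N), m = k·sign(M), ν = 1/(2|N|), μ = 1/(2|M|). Define the maps on ℝ²: f̃(x,y) = (x, y + 2L(1 − sign(x)·x)) restricted to points with x ≠ 0, VH(x,y) = (−y,x), HV(x,y) = (y,−x), and r_p(x,y) = (x, y − pL) for p ∈ ℤ. Let (x,y) ∈ ℝ² with x ≠ 0 and set ε = sign(x); suppose the point (x',y') := VH∘r_n∘f̃^{kN}(x,y) has x' ≠ 0 and set ε' = sign(x'), where f̃^{kN} denotes the map (x,y) ↦ (x, y + 2LkN(1 − sign(x)·x)). Then HV∘r_m∘f̃^{kM}∘VH∘r_n∘f̃^{kN}(x,y) = A·(x,y) + v, where A = [[1 − 4L²k²NMεε', 2LkMε'],[−2LkNε, 1]] and v = (4L²k²ε'MN(1−ν) + 2LkM(1−μ), 2LkN(1−ν)). -/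
import Mathlib


/-- The lift `f̃^c` of the (`c`-fold) piecewise-linear shear:
`(x,y) ↦ (x, y + 2Lc(1 − sign(x)·x))`. -/
noncomputable def shearLift (L c : ℝ) : ℝ × ℝ → ℝ × ℝ :=
  fun p => (p.1, p.2 + 2 * L * c * (1 - Real.sign p.1 * p.1))

/-- The gluing map `VH(x,y) = (−y,x)`. -/
def vhMap : ℝ × ℝ → ℝ × ℝ := fun p => (-p.2, p.1)

/-- The gluing map `HV(x,y) = (y,−x)`. -/
def hvMap : ℝ × ℝ → ℝ × ℝ := fun p => (p.2, -p.1)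

/-- The deck transformation `r_p(x,y) = (x, y − pL)`. -/
def deck (L : ℝ) (p : ℤ) : ℝ × ℝ → ℝ × ℝ := fun q => (q.1, q.2 - (p : ℝ) * L)

/-- One vertical-then-horizontal step of the lifted piecewise-linear egg-beater dynamics
is the affine map `A·(x,y) + v`: with `n = k·sign N`, `m = k·sign M`, `ν = 1/(2|N|)`,
`μ = 1/(2|M|)`, `ε = sign x`, `(x',y') = VH∘r_n∘f̃^{kN}(x,y)` and `ε' = sign x'`, one has
`HV∘r_m∘f̃^{kM}(x',y') = A·(x,y) + v` where
`A = [[1 − 4L²k²NMεε', 2LkMε'],[−2LkNε, 1]]` and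
`v = (4L²k²ε'MN(1−ν) + 2LkM(1−μ), 2LkN(1−ν))`. -/
theorem stmt16 (L : ℝ) (hL : 0 < L) (N M : ℤ) (hN : N ≠ 0) (hM : M ≠ 0)
    (k : ℕ) (hk : 0 < k)
    (x y : ℝ) (hx : x ≠ 0) (ε : ℝ) (hε : ε = Real.sign x)
    (x' y' : ℝ)
    (hq : (x', y') = vhMap (deck L ((k : ℤ) * N.sign) (shearLift L ((k : ℝ) * (N : ℝ)) (x, y))))
    (hx' : x' ≠ 0) (ε' : ℝ) (hε' : ε' = Real.sign x') :
    hvMap (deck L ((k : ℤ) * M.sign) (shearLift L ((k : ℝ) * (M : ℝ)) (x', y'))) =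
      ((1 - 4 * L ^ 2 * (k : ℝ) ^ 2 * (N : ℝ) * (M : ℝ) * ε * ε') * x +
          2 * L * (k : ℝ) * (M : ℝ) * ε' * y +
          (4 * L ^ 2 * (k : ℝ) ^ 2 * ε' * (M : ℝ) * (N : ℝ) * (1 - 1 / (2 * |(N : ℝ)|)) +
            2 * L * (k : ℝ) * (M : ℝ) * (1 - 1 / (2 * |(M : ℝ)|))),
        -(2 * L * (k : ℝ) * (N : ℝ) * ε) * x + y +
          2 * L * (k : ℝ) * (N : ℝ) * (1 - 1 / (2 * |(N : ℝ)|))) := by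
  simp only [vhMap, deck, shearLift, Prod.mk.injEq] at hq
  obtain ⟨h1, h2⟩ := hq
  have hNa : |(N : ℝ)| ≠ 0 := by simp [abs_ne_zero, hN]
  have hMa : |(M : ℝ)| ≠ 0 := by simp [abs_ne_zero, hM]
  have hsN : ((N.sign : ℤ) : ℝ) = (N : ℝ) / |(N : ℝ)| := by
    rw [eq_div_iff hNa, ← Int.cast_abs, ← Int.cast_mul, Int.sign_mul_abs]
  have hsM : ((M.sign : ℤ) : ℝ) = (M : ℝ) / |(M : ℝ)| := by
    rw [eq_div_iff hMa, ← Int.cast_abs, ← Int.cast_mul, Int.sign_mul_abs]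
  rw [← hε] at h1
  simp only [hvMap, deck, shearLift, Prod.mk.injEq, ← hε']
  rw [h1, h2]
  push_cast [hsN, hsM]
  constructor
  · field_simp
    ring
  · field_simp
    ring
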